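/- Let A = {2^{j-1} : j ≥ 1} and σ_1^{(A)}(n) = ∑_{j ≥ 1, 2^{j-1} | n} 2^{j-1} = 2^{v_2(n)+1} - 1, the sum of the powers of 2 dividing n. Then for every n ≥ 1: ∑_{j=1}^{n} (-1)^{s(n-j)} σ_1^{(A)}(j) = (-1)^{s(n)-1} n. -/

import Mathlib

/-!
Write `t m = (-1)^{s(m)}` (the Thue–Morse sign) and `F n = ∑_{m<n} t(m) σ(n-m)`. Both factors
obey binary recursions: `t(2m) = t(m)`, `t(2m+1) = -t(m)`, `σ(2m+1) = 1`, `σ(2m) = 2σ(m) + 1`.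
Pairing the terms `m = 2i, 2i+1` of `F` therefore gives `F(2n) = 2F(n)` and
`F(2n+1) = t(n) - 2F(n)`, and induction on the binary expansion yields `F(n) = -t(n) n`.
-/

/-- Binary digit sum: number of ones in the binary expansion of `n`. -/
def binDigitSum (n : ℕ) : ℕ := (Nat.digits 2 n).sum

/-- `σ_1^{(A)}(n)`, for `A = {2^{j-1} : j ≥ 1}`: the sum of the powers of `2` dividing `n`,
i.e. `2^{v_2(n)+1} - 1`. -/
def sigma1Pow2 (n : ℕ) : ℕ := 2 ^ (padicValNat 2 n + 1) - 1

theorem Finset.sum_range_two_mul {M : Type*} [AddCommMonoid M] (f : ℕ → M) (n : ℕ) :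
    ∑ m ∈ range (2 * n), f m = ∑ i ∈ range n, (f (2 * i) + f (2 * i + 1)) := by
  induction n with
  | zero => simp
  | succ n ih =>
    rw [Nat.mul_succ, sum_range_succ, sum_range_succ, sum_range_succ, ih, add_assoc]

theorem binDigitSum_two_mul_add_one (m : ℕ) : binDigitSum (2 * m + 1) = binDigitSum m + 1 := by
  rw [binDigitSum, Nat.digits_def' (by norm_num) (by omega),
    show (2 * m + 1) % 2 = 1 by omega, show (2 * m + 1) / 2 = m by omega,
    List.sum_cons, add_comm, binDigitSum]

theorem binDigitSum_two_mul (m : ℕ) : binDigitSum (2 * m) = binDigitSum m := by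
  rcases Nat.eq_zero_or_pos m with rfl | hm
  · rfl
  · rw [binDigitSum, Nat.digits_def' (by norm_num) (by omega), Nat.mul_mod_right,
      Nat.mul_div_cancel_left m two_pos, List.sum_cons, zero_add, binDigitSum]

theorem binDigitSum_pos {n : ℕ} (hn : n ≠ 0) : 0 < binDigitSum n := by
  induction n using Nat.evenOddRec with
  | h0 => exact absurd rfl hn
  | h_even m ih => rw [binDigitSum_two_mul]; exact ih (by omega)
  | h_odd m _ => rw [binDigitSum_two_mul_add_one]; exact Nat.succ_pos _

def thueMorseSign (m : ℕ) : ℤ := (-1) ^ binDigitSum m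

theorem thueMorseSign_two_mul (m : ℕ) : thueMorseSign (2 * m) = thueMorseSign m := by
  rw [thueMorseSign, binDigitSum_two_mul, thueMorseSign]

theorem thueMorseSign_two_mul_add_one (m : ℕ) :
    thueMorseSign (2 * m + 1) = -thueMorseSign m := by
  rw [thueMorseSign, binDigitSum_two_mul_add_one, pow_succ, mul_neg_one, thueMorseSign]

theorem sigma1Pow2_two_mul_add_one (m : ℕ) : sigma1Pow2 (2 * m + 1) = 1 := by
  rw [sigma1Pow2, padicValNat.eq_zero_of_not_dvd (by omega)]
  rfl

theorem sigma1Pow2_two_mul {m : ℕ} (hm : m ≠ 0) : sigma1Pow2 (2 * m) = 2 * sigma1Pow2 m + 1 := by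
  have hv : padicValNat 2 (2 * m) = padicValNat 2 m + 1 := by
    rw [padicValNat.mul two_ne_zero hm, padicValNat.self one_lt_two, add_comm]
  have hpos : 1 ≤ 2 ^ (padicValNat 2 m + 1) := Nat.one_le_two_pow
  rw [sigma1Pow2, sigma1Pow2, hv, pow_succ 2 (padicValNat 2 m + 1)]
  omega

def thueMorseConv (n : ℕ) : ℤ :=
  ∑ m ∈ Finset.range n, thueMorseSign m * sigma1Pow2 (n - m)

theorem thueMorseConv_two_mul (n : ℕ) : thueMorseConv (2 * n) = 2 * thueMorseConv n := by
  rw [thueMorseConv, Finset.sum_range_two_mul, thueMorseConv, Finset.mul_sum]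
  refine Finset.sum_congr rfl fun i hi => ?_
  have hi : i < n := Finset.mem_range.mp hi
  rw [show 2 * n - 2 * i = 2 * (n - i) by omega, show 2 * n - (2 * i + 1) = 2 * (n - i - 1) + 1 by omega,
    sigma1Pow2_two_mul (by omega), sigma1Pow2_two_mul_add_one, thueMorseSign_two_mul,
    thueMorseSign_two_mul_add_one]
  push_cast
  ring

theorem thueMorseConv_two_mul_add_one (n : ℕ) :
    thueMorseConv (2 * n + 1) = thueMorseSign n - 2 * thueMorseConv n := by
  have hpair : ∀ i ∈ Finset.range n,
      thueMorseSign (2 * i) * sigma1Pow2 (2 * n + 1 - 2 * i)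
        + thueMorseSign (2 * i + 1) * sigma1Pow2 (2 * n + 1 - (2 * i + 1))
      = -(2 * (thueMorseSign i * sigma1Pow2 (n - i))) := by
    intro i hi
    have hi : i < n := Finset.mem_range.mp hi
    rw [show 2 * n + 1 - 2 * i = 2 * (n - i) + 1 by omega,
      show 2 * n + 1 - (2 * i + 1) = 2 * (n - i) by omega, sigma1Pow2_two_mul (by omega),
      sigma1Pow2_two_mul_add_one, thueMorseSign_two_mul, thueMorseSign_two_mul_add_one]
    push_cast
    ring
  rw [thueMorseConv, Finset.sum_range_succ, Finset.sum_range_two_mul, Finset.sum_congr rfl hpair,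
    Finset.sum_neg_distrib, show 2 * n + 1 - 2 * n = 2 * 0 + 1 by omega,
    sigma1Pow2_two_mul_add_one, thueMorseSign_two_mul, thueMorseConv, Finset.mul_sum]
  push_cast
  ring

theorem thueMorseConv_eq (n : ℕ) : thueMorseConv n = -thueMorseSign n * n := by
  induction n using Nat.evenOddRec with
  | h0 => simp [thueMorseConv]
  | h_even n ih => rw [thueMorseConv_two_mul, ih, thueMorseSign_two_mul]; push_cast; ring
  | h_odd n ih =>
    rw [thueMorseConv_two_mul_add_one, ih, thueMorseSign_two_mul_add_one]; push_cast; ring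

/-- `∑_{j=1}^{n} (-1)^{s(n-j)} σ_1^{(A)}(j) = (-1)^{s(n)-1} n` for all `n ≥ 1`. -/
theorem stmt_17 (n : ℕ) (hn : 1 ≤ n) :
    ∑ j ∈ Finset.Icc 1 n, (-1 : ℤ) ^ binDigitSum (n - j) * (sigma1Pow2 j : ℤ)
      = (-1 : ℤ) ^ (binDigitSum n - 1) * (n : ℤ) := by
  have hreflect : ∑ j ∈ Finset.Icc 1 n, (-1 : ℤ) ^ binDigitSum (n - j) * (sigma1Pow2 j : ℤ)
      = thueMorseConv n := by
    refine Finset.sum_nbij' (n - ·) (n - ·) ?_ ?_ ?_ ?_ ?_ <;> intro j hj <;>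
      simp only [Finset.mem_Icc, Finset.mem_range] at hj ⊢
    · omega
    · omega
    · omega
    · omega
    · rw [thueMorseSign, Nat.sub_sub_self hj.2]
  have hsign : (-1 : ℤ) ^ (binDigitSum n - 1) = -thueMorseSign n := by
    rw [thueMorseSign, ← Nat.sub_add_cancel (binDigitSum_pos (by omega : n ≠ 0)), pow_succ,
      Nat.add_sub_cancel]
    ring
  rw [hreflect, thueMorseConv_eq, hsign]
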